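/- For every integer n ≥ 1, the expected number of vertices of G_1^n that have a loop, degree 2, and second degree 0 satisfies E[P_n(2,0)] = n/(2n−1); in particular E[P_n(2,0)] ≤ 1. -/

import Mathlib

open scoped Classical

/-!
The Bollobás–Riordan random graph `G_1^n` (case `m = 1`), with vertices `0, …, n-1`
(0-indexed).  A realization is encoded by a map `f : ℕ → ℕ`, where for each `t < n`
the graph contains the edge `{t, f t}` (a loop at `t` when `f t = t`); only maps with
`f t ≤ t` get positive probability.  The degree of `s` is then
`[s < n] + #{u < n : f u = s}` (a loop contributing 2).  The vertex `t` (1-indexed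
`t+1`) chooses its neighbor `f t` preferentially: an existing vertex `s < t` with
probability `deg(s)/(2(t+1)-1)` (degree in the current graph on `0, …, t-1`), and
itself (forming a loop) with probability `1/(2(t+1)-1)`.
-/

/-- Probability weight of the choice made when vertex `t` (0-indexed) is added:
it attaches to `f t`. The current degree of a vertex `s < t` in the graph with
edges `{u, f u}`, `u < t`, equals `1 + #{u < t : f u = s}`. -/
noncomputable def brStepWeight (f : ℕ → ℕ) (t : ℕ) : ℝ :=
  (if f t = t then 1
   else if f t < t then
     (1 + (((Finset.range t).filter (fun u => f u = f t)).card : ℝ))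
   else 0) / (2 * (t : ℝ) + 1)

/-- Probability of the realization `f` of `G_1^n`. -/
noncomputable def brProb (n : ℕ) (f : ℕ → ℕ) : ℝ :=
  ∏ t ∈ Finset.range n, brStepWeight f t

/-- Extend a finitary configuration to a map `ℕ → ℕ`. -/
def brExt (n : ℕ) (f : Fin n → Fin n) : ℕ → ℕ :=
  fun t => if h : t < n then (f ⟨t, h⟩ : ℕ) else 0

/-- Expectation of a functional `g` of the random graph `G_1^n`. -/
noncomputable def brExpect (n : ℕ) (g : (ℕ → ℕ) → ℝ) : ℝ :=
  ∑ f : Fin n → Fin n, brProb n (brExt n f) * g (brExt n f)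

/-- Probability of an event `A` for the random graph `G_1^n`. -/
noncomputable def brProbEvent (n : ℕ) (A : (ℕ → ℕ) → Prop) : ℝ :=
  brExpect n (fun f => if A f then 1 else 0)

/-- Degree of the vertex `s` in `G_1^n` (a loop contributes 2). -/
def brDeg (n : ℕ) (f : ℕ → ℕ) (s : ℕ) : ℕ :=
  (if s < n then 1 else 0) + ((Finset.range n).filter (fun u => f u = s)).card

/-- `a` and `b` are joined by an edge of `G_1^n`. -/
def brAdj (n : ℕ) (f : ℕ → ℕ) (a b : ℕ) : Prop :=
  ∃ u ∈ Finset.range n, (u = a ∧ f u = b) ∨ (u = b ∧ f u = a)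

/-- Second degree of the vertex `t` in `G_1^n`: the number of edges `ij` with
`i ≠ t`, `j ≠ t`, `it ∈ G_1^n`, `ij ∈ G_1^n` — i.e. the number of edges adjacent to
neighbors of `t`, excluding the edges adjacent to `t` itself.  In this multigraph
count, each edge `ij` (with indeterminate `i`, `j`) is counted once for each of its
endpoints that is a neighbor of `t`; in particular a loop at a neighbor of `t`
contributes `2`, so that `d_2(t) = Σ_{u ~ t, u ≠ t} d(u) − (d(t) − 2·#loops at t)`,
as used throughout the paper (e.g. a vertex of degree `1` with neighbor `q` has
second degree `d(q) − 1`). -/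
noncomputable def brD2 (n : ℕ) (f : ℕ → ℕ) (t : ℕ) : ℕ :=
  ∑ v ∈ Finset.range n,
    ((if v ≠ t ∧ f v ≠ t ∧ brAdj n f v t then 1 else 0) +
     (if v ≠ t ∧ f v ≠ t ∧ brAdj n f (f v) t then 1 else 0))

/-- `X_n(k)`: the number of vertices of `G_1^n` with second degree `k`. -/
noncomputable def brX (n k : ℕ) (f : ℕ → ℕ) : ℕ :=
  ((Finset.range n).filter (fun t => brD2 n f t = k)).card

/-- `N_n(l,k)`: the number of vertices of `G_1^n` with degree `l`, second degree `k`,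
and no loop. -/
noncomputable def brNcount (n l k : ℕ) (f : ℕ → ℕ) : ℕ :=
  ((Finset.range n).filter
    (fun t => brDeg n f t = l ∧ brD2 n f t = k ∧ f t ≠ t)).card

/-- `P_n(l,k)`: the number of vertices of `G_1^n` with a loop, degree `l`, and
second degree `k`. -/
noncomputable def brPcount (n l k : ℕ) (f : ℕ → ℕ) : ℕ :=
  ((Finset.range n).filter
    (fun t => brDeg n f t = l ∧ brD2 n f t = k ∧ f t = t)).card

/-- `M_n^2(k)`: the expected number of vertices of `G_1^n` with second degree `k`. -/
noncomputable def M2 (n k : ℕ) : ℝ := brExpect n (fun f => (brX n k f : ℝ))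

/-- `M_n^1(d)`: the expected number of vertices of `G_1^n` with degree `d`. -/
noncomputable def M1 (n d : ℕ) : ℝ :=
  brExpect n (fun f => (((Finset.range n).filter (fun t => brDeg n f t = d)).card : ℝ))

/-- `E[N_n(l,k)]`. -/
noncomputable def EN (n l k : ℕ) : ℝ := brExpect n (fun f => (brNcount n l k f : ℝ))

/-- `E[P_n(l,k)]`. -/
noncomputable def EP (n l k : ℕ) : ℝ := brExpect n (fun f => (brPcount n l k f : ℝ))

/-!
Vertex `t` has degree `2` and second degree `0` exactly when it is an isolated loop. It
takes its loop with probability `1/(2t+1)`, and every later vertex `s` then avoids it with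
probability `1 - 2/(2s+1) = (2s-1)/(2s+1)`; the product telescopes to `1/(2n-1)` whatever
`t` is, and summing over the `n` vertices gives `n/(2n-1)`.
-/

open Finset Function

noncomputable def brSupport : ℕ → Finset (ℕ → ℕ)
  | 0 => {fun _ => 0}
  | n + 1 => (brSupport n ×ˢ range (n + 1)).image fun p => update p.1 n p.2

theorem mem_brSupport {n : ℕ} {f : ℕ → ℕ} :
    f ∈ brSupport n ↔ (∀ t, n ≤ t → f t = 0) ∧ ∀ t < n, f t ≤ t := by
  induction n generalizing f with
  | zero =>
    simp only [brSupport, mem_singleton, zero_le, forall_const, not_lt_zero, IsEmpty.forall_iff,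
      and_true]
    exact ⟨fun hf t => hf ▸ rfl, fun hf => funext hf⟩
  | succ n ih =>
    simp only [brSupport, mem_image, mem_product, mem_range, Prod.exists, ih]
    constructor
    · rintro ⟨h, s, ⟨⟨hzero, hle⟩, hs⟩, rfl⟩
      refine ⟨fun u hu => ?_, fun u hu => ?_⟩
      · rw [update_of_ne (by omega)]; exact hzero u (by omega)
      · rcases eq_or_ne u n with rfl | hne
        · rw [update_self]; omega
        · rw [update_of_ne hne]; exact hle u (by omega)
    · rintro ⟨hzero, hle⟩
      refine ⟨update f n 0, f n, ⟨⟨fun u hu => ?_, fun u hu => ?_⟩,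
        Nat.lt_succ_of_le (hle n n.lt_succ_self)⟩, by rw [update_idem, update_eq_self]⟩
      · rcases eq_or_ne u n with rfl | hne
        · rw [update_self]
        · rw [update_of_ne hne]; exact hzero u (by omega)
      · rw [update_of_ne (by omega)]; exact hle u (by omega)

theorem brStepWeight_congr {f g : ℕ → ℕ} {t : ℕ} (h : ∀ u ≤ t, f u = g u) :
    brStepWeight f t = brStepWeight g t := by
  have hfilter : (range t).filter (fun u => f u = f t) = (range t).filter (fun u => g u = g t) :=
    filter_congr fun u hu => by rw [h u (mem_range.1 hu).le, h t le_rfl]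
  rw [brStepWeight, brStepWeight, hfilter, h t le_rfl]

theorem brProb_update_self {n s : ℕ} {h : ℕ → ℕ} : brProb n (update h n s) = brProb n h :=
  prod_congr rfl fun t ht =>
    brStepWeight_congr fun u hu => update_of_ne (by have := mem_range.1 ht; omega) _ _

theorem brStepWeight_update_self {n s : ℕ} {h : ℕ → ℕ} (hs : s ≤ n) :
    brStepWeight (update h n s) n =
      (if s = n then 1 else 1 + (((range n).filter (fun u => h u = s)).card : ℝ)) /
        (2 * n + 1) := by
  rw [brStepWeight, update_self]
  rcases eq_or_ne s n with rfl | hne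
  · simp
  · have hfilter : (range n).filter (fun u => update h n s u = s) =
        (range n).filter (fun u => h u = s) :=
      filter_congr fun u hu => by rw [update_of_ne (by have := mem_range.1 hu; omega)]
    rw [if_neg hne, if_neg hne, if_pos (lt_of_le_of_ne hs hne), hfilter]

/-- The degrees of the `n` old vertices add up to `2n`, and the loop has weight `1`. -/
theorem sum_brStepWeight_update {n : ℕ} {h : ℕ → ℕ} (hh : h ∈ brSupport n) :
    ∑ s ∈ range (n + 1), brStepWeight (update h n s) n = 1 := by
  have hfibers : ∑ s ∈ range n, (((range n).filter (fun u => h u = s)).card : ℝ) = n := by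
    have := card_eq_sum_card_fiberwise (s := range n) (t := range n) (f := h)
      fun u hu => mem_range.2 ((mem_brSupport.1 hh).2 u (mem_range.1 hu) |>.trans_lt
        (mem_range.1 hu))
    exact_mod_cast (card_range n ▸ this).symm
  rw [sum_range_succ, brStepWeight_update_self le_rfl, if_pos rfl,
    sum_congr rfl fun s hs => brStepWeight_update_self (by have := mem_range.1 hs; omega),
    ← sum_div, sum_congr rfl fun s hs => if_neg (by have := mem_range.1 hs; omega),
    sum_add_distrib, hfibers, sum_const, card_range, nsmul_one]
  field_simp
  ring

theorem sum_brSupport_succ {n : ℕ} (g : (ℕ → ℕ) → ℝ) :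
    ∑ f ∈ brSupport (n + 1), brProb (n + 1) f * g f =
      ∑ h ∈ brSupport n, brProb n h *
        ∑ s ∈ range (n + 1), brStepWeight (update h n s) n * g (update h n s) := by
  have hinj : Set.InjOn (fun p : (ℕ → ℕ) × ℕ => update p.1 n p.2)
      ↑(brSupport n ×ˢ range (n + 1)) := by
    rintro ⟨h, s⟩ hp ⟨h', s'⟩ hq heq
    have hzero : ∀ {k : ℕ → ℕ}, k ∈ brSupport n → k = update k n 0 := fun hk => by
      rw [← (mem_brSupport.1 hk).1 n le_rfl, update_eq_self]
    have hs : s = s' := by simpa using congrFun heq n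
    have hh : h = h' := by
      have := congrArg (update · n 0) heq
      simp only [update_idem] at this
      exact (hzero (mem_product.1 hp).1).trans (this.trans (hzero (mem_product.1 hq).1).symm)
    rw [hh, hs]
  rw [brSupport, sum_image hinj, sum_product]
  refine sum_congr rfl fun h _ => ?_
  rw [mul_sum]
  refine sum_congr rfl fun s _ => ?_
  rw [brProb, prod_range_succ, ← brProb, brProb_update_self]
  ring

theorem sum_brProb_brSupport (n : ℕ) : ∑ f ∈ brSupport n, brProb n f = 1 := by
  induction n with
  | zero => simp [brSupport, brProb]
  | succ n ih =>
    have := sum_brSupport_succ (n := n) fun _ => 1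
    simp only [mul_one] at this
    rw [this, ← ih]
    exact sum_congr rfl fun h hh => by rw [sum_brStepWeight_update hh, mul_one]

theorem brExt_injective (n : ℕ) : Injective (brExt n) := fun f f' h =>
  funext fun t => Fin.ext (by simpa [brExt] using congrFun h t)

theorem brProb_eq_zero_of_lt {n t : ℕ} {f : ℕ → ℕ} (ht : t < n) (hft : t < f t) :
    brProb n f = 0 :=
  prod_eq_zero (mem_range.2 ht) <| by
    rw [brStepWeight, if_neg hft.ne', if_neg hft.not_gt, zero_div]

theorem brExpect_eq_sum_brSupport (n : ℕ) (g : (ℕ → ℕ) → ℝ) :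
    brExpect n g = ∑ f ∈ brSupport n, brProb n f * g f := by
  rw [brExpect,
    ← sum_image (f := fun f => brProb n f * g f) fun f _ f' _ h => brExt_injective n h]
  refine (sum_subset (fun f hf => ?_) fun f hf hnot => ?_).symm
  · obtain ⟨hzero, hle⟩ := mem_brSupport.1 hf
    refine mem_image.2
      ⟨fun t => ⟨f t, (hle t t.isLt).trans_lt t.isLt⟩, mem_univ _, funext fun u => ?_⟩
    by_cases hu : u < n
    · simp [brExt, hu]
    · simp [brExt, hu, hzero u (not_lt.1 hu)]
  · obtain ⟨F, -, rfl⟩ := mem_image.1 hf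
    have hzero : ∀ t, n ≤ t → brExt n F t = 0 := fun t ht => by simp [brExt, not_lt.2 ht]
    obtain ⟨t, ht, hlt⟩ : ∃ t < n, t < brExt n F t := by
      by_contra! hle
      exact hnot (mem_brSupport.2 ⟨hzero, hle⟩)
    rw [brProb_eq_zero_of_lt ht hlt, zero_mul]

def IsolatedLoop (n t : ℕ) (f : ℕ → ℕ) : Prop :=
  f t = t ∧ ∀ u < n, u ≠ t → f u ≠ t

section IsolatedLoop

variable {n t : ℕ} {f : ℕ → ℕ}

theorem IsolatedLoop.filter_eq_singleton (ht : t < n) (hf : IsolatedLoop n t f) :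
    (range n).filter (fun u => f u = t) = {t} := by
  ext u
  simp only [mem_filter, mem_range, mem_singleton]
  refine ⟨fun ⟨hu, hfu⟩ => ?_, fun hu => by subst hu; exact ⟨ht, hf.1⟩⟩
  by_contra hne
  exact hf.2 u hu hne hfu

theorem brDeg_eq_two_and_loop_iff (ht : t < n) :
    brDeg n f t = 2 ∧ f t = t ↔ IsolatedLoop n t f := by
  refine ⟨fun ⟨hdeg, hloop⟩ => ⟨hloop, fun u hu hne hfu => hne ?_⟩,
    fun hf => ⟨?_, hf.1⟩⟩
  · rw [brDeg, if_pos ht] at hdeg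
    exact card_le_one (s := (range n).filter (fun u => f u = t)).1 (by omega)
      u (by simp [hu, hfu]) t (by simp [ht, hloop])
  · rw [brDeg, if_pos ht, hf.filter_eq_singleton ht, card_singleton]

theorem IsolatedLoop.brD2_eq_zero (hf : IsolatedLoop n t f) : brD2 n f t = 0 := by
  refine sum_eq_zero fun v _ => ?_
  have hnot_adj : ∀ w, w ≠ t → ¬ brAdj n f w t := by
    rintro w hw ⟨u, hu, ⟨huw, hfu⟩ | ⟨hut, hfu⟩⟩
    · exact hf.2 u (mem_range.1 hu) (huw ▸ hw) hfu
    · exact hw (by rw [← hfu, hut, hf.1])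
  rw [if_neg fun h => hnot_adj v h.1 h.2.2, if_neg fun h => hnot_adj (f v) h.2.1 h.2.2,
    add_zero]

theorem isolatedLoop_iff (ht : t < n) :
    brDeg n f t = 2 ∧ brD2 n f t = 0 ∧ f t = t ↔ IsolatedLoop n t f := by
  constructor
  · rintro ⟨hdeg, -, hloop⟩
    exact (brDeg_eq_two_and_loop_iff ht).1 ⟨hdeg, hloop⟩
  · intro hf
    obtain ⟨hdeg, hloop⟩ := (brDeg_eq_two_and_loop_iff ht).2 hf
    exact ⟨hdeg, hf.brD2_eq_zero, hloop⟩

theorem isolatedLoop_succ_update_self_iff {h : ℕ → ℕ} {s : ℕ} (hh : h ∈ brSupport t) :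
    IsolatedLoop (t + 1) t (update h t s) ↔ s = t := by
  refine ⟨fun hf => by simpa using hf.1,
    fun hs => ⟨by rw [hs, update_self], fun u hu hne => ?_⟩⟩
  rw [update_of_ne hne]
  have := (mem_brSupport.1 hh).2 u (by omega)
  omega

theorem isolatedLoop_succ_update_iff {h : ℕ → ℕ} {s : ℕ} (ht : t < n) :
    IsolatedLoop (n + 1) t (update h n s) ↔ IsolatedLoop n t h ∧ s ≠ t := by
  simp only [IsolatedLoop, update_of_ne ht.ne]
  constructor
  · rintro ⟨hloop, hothers⟩
    refine ⟨⟨hloop, fun u hu hne => ?_⟩,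
      fun hs => hothers n n.lt_succ_self ht.ne' (by simp [hs])⟩
    simpa [update_of_ne hu.ne] using hothers u (by omega) hne
  · rintro ⟨⟨hloop, hothers⟩, hs⟩
    refine ⟨hloop, fun u hu hne => ?_⟩
    rcases eq_or_ne u n with rfl | hun
    · simpa using hs
    · simpa [update_of_ne hun] using hothers u (by omega) hne

theorem sum_brStepWeight_mul_isolatedLoop_update_self {h : ℕ → ℕ} (hh : h ∈ brSupport t) :
    ∑ s ∈ range (t + 1), brStepWeight (update h t s) t *
        (if IsolatedLoop (t + 1) t (update h t s) then 1 else 0) = 1 / (2 * t + 1) := by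
  simp only [isolatedLoop_succ_update_self_iff hh, mul_ite, mul_one, mul_zero, sum_ite_eq',
    mem_range, lt_add_one, if_true, brStepWeight_update_self le_rfl]

/-- Vertex `n` avoids the isolated loop `t`, which has degree `2`, with probability
`1 - 2/(2n+1)`. -/
theorem sum_brStepWeight_mul_isolatedLoop_update {h : ℕ → ℕ} (ht : t < n)
    (hh : h ∈ brSupport n) :
    ∑ s ∈ range (n + 1), brStepWeight (update h n s) n *
        (if IsolatedLoop (n + 1) t (update h n s) then 1 else 0) =
      (if IsolatedLoop n t h then 1 else 0) * ((2 * n - 1) / (2 * n + 1)) := by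
  simp_rw [isolatedLoop_succ_update_iff ht]
  by_cases hI : IsolatedLoop n t h
  · have hmass := sum_brStepWeight_update hh
    rw [← add_sum_erase _ _ (mem_range.2 (by omega : t < n + 1)),
      brStepWeight_update_self ht.le, if_neg ht.ne, hI.filter_eq_singleton ht, card_singleton]
      at hmass
    simp only [hI, true_and, if_true, one_mul, mul_ite, mul_one, mul_zero, ← sum_filter,
      filter_ne']
    rw [eq_sub_of_add_eq' hmass]
    field_simp
    ring
  · simp [hI]

end IsolatedLoop

theorem brProbEvent_isolatedLoop {n t : ℕ} (ht : t < n) :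
    brProbEvent n (IsolatedLoop n t) = 1 / (2 * n - 1) := by
  rw [brProbEvent, brExpect_eq_sum_brSupport]
  induction n, ht using Nat.le_induction with
  | base =>
    rw [sum_brSupport_succ, sum_congr rfl fun h hh => by
      rw [sum_brStepWeight_mul_isolatedLoop_update_self hh], ← sum_mul, sum_brProb_brSupport]
    push_cast
    ring
  | succ n htn ih =>
    rw [sum_brSupport_succ, sum_congr rfl fun h hh => by
      rw [sum_brStepWeight_mul_isolatedLoop_update htn hh, ← mul_assoc], ← sum_mul, ih]
    have hn : (1 : ℝ) ≤ n := by exact_mod_cast (Nat.succ_pos t).trans_le htn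
    have hsub : (2 * n - 1 : ℝ) ≠ 0 := by linarith
    have hadd : (2 * n + 1 : ℝ) ≠ 0 := by positivity
    rw [Nat.cast_succ, show 2 * ((n : ℝ) + 1) - 1 = 2 * n + 1 by ring]
    field_simp

theorem EP_eq_sum_brProbEvent (n l k : ℕ) :
    EP n l k = ∑ t ∈ range n,
      brProbEvent n (fun f => brDeg n f t = l ∧ brD2 n f t = k ∧ f t = t) := by
  simp only [EP, brProbEvent, brExpect, brPcount, card_filter, Nat.cast_sum, Nat.cast_ite,
    Nat.cast_one, Nat.cast_zero, mul_sum]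
  rw [sum_comm]
  congr!

/-- For every `n ≥ 1`, `E[P_n(2,0)] = n/(2n−1)`; in particular `E[P_n(2,0)] ≤ 1`. -/
theorem expectation_P_two_zero :
    ∀ n : ℕ, 1 ≤ n →
      EP n 2 0 = (n : ℝ) / (2 * (n : ℝ) - 1) ∧ EP n 2 0 ≤ 1 := by
  intro n hn
  have hEP : EP n 2 0 = n / (2 * n - 1) := by
    calc EP n 2 0 = ∑ t ∈ range n, brProbEvent n (IsolatedLoop n t) := by
          rw [EP_eq_sum_brProbEvent]
          refine sum_congr rfl fun t ht => ?_
          simp only [isolatedLoop_iff (mem_range.1 ht)]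
      _ = ∑ t ∈ range n, 1 / (2 * (n : ℝ) - 1) :=
          sum_congr rfl fun t ht => brProbEvent_isolatedLoop (mem_range.1 ht)
      _ = n / (2 * n - 1) := by rw [sum_const, card_range, nsmul_eq_mul, mul_one_div]
  refine ⟨hEP, ?_⟩
  have hn' : (1 : ℝ) ≤ n := by exact_mod_cast hn
  rw [hEP, div_le_one (by linarith)]
  linarith
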